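/- For every x ∈ ℝ^d, the subdifferential of f_K at x equals the translate of the convex hull of the optimality class: ∂f_K(x) = conv(opt_K(x)) − x; moreover, the unique element of minimal norm of ∂f_K(x) (the extended gradient ∇f_K(x)) equals η_K(x) − x, where η_K(x) is the unique nearest point to x in conv(opt_K(x)). -/

import Mathlib

open scoped RealInnerProductSpace

noncomputable section

/-- The optimality class of `x` w.r.t. `K`: the points of `K` at minimal distance from `x`. -/
def optClass {d : ℕ} (K : Set (EuclideanSpace ℝ (Fin d))) (x : EuclideanSpace ℝ (Fin d)) :
    Set (EuclideanSpace ℝ (Fin d)) :=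
  {y ∈ K | dist x y = Metric.infDist x K}

/-- The subdifferential of a `(-1)`-convex function `f : ℝ^d → ℝ` at `x`:
`∂f(x) = {ξ : f(y) ≥ f(x) + ⟪ξ, y - x⟫ - ‖y - x‖²/2 for all y}`. -/
def subdiffM {d : ℕ} (f : EuclideanSpace ℝ (Fin d) → ℝ) (x : EuclideanSpace ℝ (Fin d)) :
    Set (EuclideanSpace ℝ (Fin d)) :=
  {ξ | ∀ y, f x + ⟪ξ, y - x⟫ - ‖y - x‖ ^ 2 / 2 ≤ f y}

/-!
Each `k ∈ opt_K(x)` gives the quadratic minorant `-‖y - k‖²/2 ≤ f_K(y)` touching `f_K` at `x`,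
so `k - x ∈ ∂f_K(x)`, and `∂f_K(x)` is convex. Conversely, testing `ξ ∈ ∂f_K(x)` at `y = x + t v`
against a nearest point `k_t` of `x + t v` gives `⟪v, x + ξ⟫ ≤ ⟪v, k_t⟫`; as `t → 0` the `k_t`
cluster in `opt_K(x)`, so `x + ξ` lies in every closed half-space containing the compact convex
set `conv(opt_K(x))`. The minimal-norm part is uniqueness of the point of least norm of a convex
set in a strictly convex space.
-/

open Metric Set Filter Topology

theorem exists_fin_convexCombination_of_mem_convexHull {V : Type*} [AddCommGroup V]
    [Module ℝ V] [FiniteDimensional ℝ V] {s : Set V} {x : V} (hx : x ∈ convexHull ℝ s) :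
    ∃ w ∈ stdSimplex ℝ (Fin (Module.finrank ℝ V + 1)), ∃ z : Fin (Module.finrank ℝ V + 1) → V,
      (∀ i, z i ∈ s) ∧ ∑ i, w i • z i = x := by
  obtain ⟨s₀, hs₀⟩ := convexHull_nonempty_iff.mp ⟨x, hx⟩
  obtain ⟨ι, _, z, w, hzs, hind, hw0, hw1, hwz⟩ := eq_pos_convex_span_of_mem_convexHull hx
  have hcard : Fintype.card ι ≤ Fintype.card (Fin (Module.finrank ℝ V + 1)) := by
    simpa using hind.card_le_finrank_succ.trans (Nat.succ_le_succ (Submodule.finrank_le _))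
  obtain ⟨e⟩ := Function.Embedding.nonempty_of_card_le hcard
  -- pad the Carathéodory combination with zero weights
  classical
  let W := Function.extend e w 0
  let Z := Function.extend e z fun _ => s₀
  have hW : ∀ i, W (e i) = w i := e.injective.extend_apply w 0
  have hZ : ∀ i, Z (e i) = z i := e.injective.extend_apply z _
  have hW0 : ∀ j ∉ range e, W j = 0 := fun j hj =>
    Function.extend_apply' _ _ _ fun ⟨i, hi⟩ => hj ⟨i, hi⟩
  refine ⟨W, ⟨fun j => ?_, ?_⟩, Z, fun j => ?_, ?_⟩
  · by_cases hj : j ∈ range e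
    · obtain ⟨i, rfl⟩ := hj
      exact hW i ▸ (hw0 i).le
    · exact (hW0 j hj).ge
  · rw [← hw1]
    exact (Fintype.sum_of_injective e e.injective w W hW0 fun i => (hW i).symm).symm
  · by_cases hj : j ∈ range e
    · obtain ⟨i, rfl⟩ := hj
      exact hZ i ▸ hzs (mem_range_self i)
    · rw [show Z j = s₀ from Function.extend_apply' _ _ _ fun ⟨i, hi⟩ => hj ⟨i, hi⟩]
      exact hs₀
  · rw [← hwz]
    refine (Fintype.sum_of_injective e e.injective _ _ (fun j hj => ?_) fun i => ?_).symm
    · rw [hW0 j hj, zero_smul]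
    · rw [hW, hZ]

section Convex

variable {V : Type*} [NormedAddCommGroup V] [NormedSpace ℝ V]

theorem IsCompact.convexHull_of_finiteDimensional [FiniteDimensional ℝ V] {s : Set V}
    (hs : IsCompact s) : IsCompact (convexHull ℝ s) := by
  set N := Module.finrank ℝ V + 1
  have hcombo : Continuous fun p : (Fin N → ℝ) × (Fin N → V) => ∑ i, p.1 i • p.2 i := by
    fun_prop
  suffices convexHull ℝ s =
      (fun p : (Fin N → ℝ) × (Fin N → V) => ∑ i, p.1 i • p.2 i) ''
        (stdSimplex ℝ (Fin N) ×ˢ univ.pi fun _ => s) by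
    rw [this]
    exact ((isCompact_stdSimplex ℝ (Fin N)).prod (isCompact_univ_pi fun _ => hs)).image hcombo
  refine Subset.antisymm (fun x hx => ?_) ?_
  · obtain ⟨w, hw, z, hz, rfl⟩ := exists_fin_convexCombination_of_mem_convexHull hx
    exact ⟨(w, z), ⟨hw, fun i _ => hz i⟩, rfl⟩
  · rintro _ ⟨⟨w, z⟩, ⟨hw, hz⟩, rfl⟩
    exact (convex_convexHull ℝ s).sum_mem (fun i _ => hw.1 i) hw.2
      fun i _ => subset_convexHull ℝ s (hz i trivial)

theorem eq_of_norm_eq_of_forall_norm_le [StrictConvexSpace ℝ V] {S : Set V} (hS : Convex ℝ S)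
    {a b : V} (ha : a ∈ S) (hb : b ∈ S) (hmin : ∀ c ∈ S, ‖a‖ ≤ ‖c‖) (hba : ‖b‖ = ‖a‖) :
    b = a := by
  by_contra hne
  have hmid : (1 / 2 : ℝ) • (b + a) ∈ S := by
    rw [smul_add]
    exact hS hb ha (by norm_num) (by norm_num) (by norm_num)
  have := (norm_midpoint_lt_iff hba).mpr hne
  linarith [hmin _ hmid]

end Convex

section DistanceSquared

variable {d : ℕ}

local notation "E" => EuclideanSpace ℝ (Fin d)

theorem isCompact_optClass {K : Set E} (hK : IsClosed K) (x : E) : IsCompact (optClass K x) := by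
  refine (isCompact_closedBall x (infDist x K)).of_isClosed_subset ?_
    fun y hy => mem_closedBall'.mpr hy.2.le
  exact hK.inter (isClosed_eq (continuous_const.dist continuous_id) continuous_const)

theorem optClass_nonempty {K : Set E} (hKne : K.Nonempty) (hK : IsClosed K) (x : E) :
    (optClass K x).Nonempty := by
  obtain ⟨k, hk, hxk⟩ := hK.exists_infDist_eq_dist hKne x
  exact ⟨k, hk, hxk.symm⟩

theorem convex_subdiffM (f : E → ℝ) (x : E) : Convex ℝ (subdiffM f x) := by
  intro a ha b hb p q hp hq hpq y
  have := add_le_add (mul_le_mul_of_nonneg_left (ha y) hp) (mul_le_mul_of_nonneg_left (hb y) hq)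
  rw [inner_add_left, real_inner_smul_left, real_inner_smul_left]
  linear_combination this + (‖y - x‖ ^ 2 / 2 + f y - f x) * hpq

theorem sub_mem_subdiffM_of_mem_optClass {K : Set E} {x k : E} (hk : k ∈ optClass K x) :
    k - x ∈ subdiffM (fun y => -(infDist y K ^ 2) / 2) x := by
  intro y
  have hyk : y - k = (y - x) - (k - x) := by abel
  calc -(infDist x K ^ 2) / 2 + ⟪k - x, y - x⟫ - ‖y - x‖ ^ 2 / 2
      = -‖y - k‖ ^ 2 / 2 := by
        rw [← hk.2, dist_eq_norm', hyk, norm_sub_sq_real (y - x) (k - x), real_inner_comm]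
        ring
    _ ≤ -(infDist y K ^ 2) / 2 := by
        rw [← dist_eq_norm]
        gcongr
        exacts [infDist_nonneg, infDist_le_dist_of_mem hk.1]

theorem inner_add_le_inner_of_mem_subdiffM {K : Set E} {x ξ v k : E} {t : ℝ}
    (hξ : ξ ∈ subdiffM (fun y => -(infDist y K ^ 2) / 2) x) (ht : 0 < t)
    (hk : k ∈ optClass K (x + t • v)) : ⟪v, x + ξ⟫ ≤ ⟪v, k⟫ := by
  have hsub := hξ (x + t • v)
  have hxk : x + t • v - k = (x - k) + t • v := by abel
  simp only [add_sub_cancel_left, ← hk.2, dist_eq_norm, hxk, norm_add_sq_real, norm_smul,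
    real_inner_smul_right, Real.norm_of_nonneg ht.le] at hsub
  have hx : infDist x K ^ 2 ≤ ‖x - k‖ ^ 2 := by
    rw [← dist_eq_norm]
    gcongr
    exacts [infDist_nonneg, infDist_le_dist_of_mem hk.1]
  have hnonpos : t * (⟪ξ, v⟫ + ⟪x - k, v⟫) ≤ 0 := by nlinarith
  rw [inner_sub_left] at hnonpos
  rw [← real_inner_comm v, ← real_inner_comm v, inner_add_left]
  nlinarith

theorem exists_mem_optClass_tendsto_subseq {K : Set E} (hK : IsClosed K) {x : E} {y k : ℕ → E}
    (hy : Tendsto y atTop (𝓝 x)) (hk : ∀ n, k n ∈ optClass K (y n)) :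
    ∃ z ∈ optClass K x, ∃ φ : ℕ → ℕ, StrictMono φ ∧ Tendsto (k ∘ φ) atTop (𝓝 z) := by
  obtain ⟨R, hR⟩ := (isBounded_iff_subset_closedBall x).mp (isBounded_range_of_tendsto y hy)
  have hbound : ∀ n, k n ∈ closedBall x (infDist x K + 2 * R) := fun n => by
    have hyx : dist (y n) x ≤ R := hR (mem_range_self n)
    calc dist (k n) x ≤ dist (y n) (k n) + dist (y n) x := dist_triangle_left _ _ _
      _ = infDist (y n) K + dist (y n) x := by rw [(hk n).2]
      _ ≤ infDist x K + dist (y n) x + dist (y n) x := by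
        gcongr
        exact infDist_le_infDist_add_dist
      _ ≤ infDist x K + 2 * R := by linarith
  obtain ⟨z, -, φ, hφ, hlim⟩ := tendsto_subseq_of_bounded isBounded_closedBall hbound
  have hzK : z ∈ K := hK.mem_of_tendsto hlim (Eventually.of_forall fun n => (hk (φ n)).1)
  have hdist : Tendsto (fun n => dist (y (φ n)) (k (φ n))) atTop (𝓝 (dist x z)) :=
    (hy.comp hφ.tendsto_atTop).dist hlim
  have hinf : Tendsto (fun n => infDist (y (φ n)) K) atTop (𝓝 (infDist x K)) :=
    ((continuous_infDist_pt K).tendsto x).comp (hy.comp hφ.tendsto_atTop)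
  refine ⟨z, ⟨hzK, tendsto_nhds_unique hdist ?_⟩, φ, hφ, hlim⟩
  simpa only [(hk _).2] using hinf

theorem exists_mem_optClass_inner_add_le_inner {K : Set E} (hKne : K.Nonempty)
    (hK : IsClosed K) {x ξ : E} (hξ : ξ ∈ subdiffM (fun y => -(infDist y K ^ 2) / 2) x)
    (v : E) : ∃ z ∈ optClass K x, ⟪v, x + ξ⟫ ≤ ⟪v, z⟫ := by
  choose k hk using fun n : ℕ => optClass_nonempty hKne hK (x + ((n : ℝ) + 1)⁻¹ • v)
  have hy : Tendsto (fun n : ℕ => x + ((n : ℝ) + 1)⁻¹ • v) atTop (𝓝 x) := by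
    simpa using tendsto_const_nhds.add
      ((tendsto_one_div_add_atTop_nhds_zero_nat (𝕜 := ℝ)).smul_const v)
  obtain ⟨z, hz, φ, -, hlim⟩ := exists_mem_optClass_tendsto_subseq hK hy hk
  refine ⟨z, hz, ge_of_tendsto' (tendsto_const_nhds.inner hlim) fun n => ?_⟩
  exact inner_add_le_inner_of_mem_subdiffM hξ (by positivity) (hk (φ n))

theorem add_mem_convexHull_optClass_of_mem_subdiffM {K : Set E} (hKne : K.Nonempty)
    (hK : IsClosed K) {x ξ : E} (hξ : ξ ∈ subdiffM (fun y => -(infDist y K ^ 2) / 2) x) :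
    x + ξ ∈ convexHull ℝ (optClass K x) := by
  rw [← iInter_halfSpaces_eq (convex_convexHull ℝ _)
    ((isCompact_optClass hK x).convexHull_of_finiteDimensional.isClosed), mem_iInter]
  intro l
  obtain ⟨z, hz, hle⟩ :=
    exists_mem_optClass_inner_add_le_inner hKne hK hξ ((InnerProductSpace.toDual ℝ E).symm l)
  rw [InnerProductSpace.toDual_symm_apply, InnerProductSpace.toDual_symm_apply] at hle
  exact ⟨z, subset_convexHull ℝ _ hz, hle⟩

theorem subdiffM_eq_image_convexHull_optClass {K : Set E} (hKne : K.Nonempty) (hK : IsClosed K)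
    (x : E) : subdiffM (fun y => -(infDist y K ^ 2) / 2) x =
      (fun z => z - x) '' convexHull ℝ (optClass K x) := by
  refine Subset.antisymm (fun ξ hξ => ?_) ?_
  · exact ⟨x + ξ, add_mem_convexHull_optClass_of_mem_subdiffM hKne hK hξ, add_sub_cancel_left x ξ⟩
  · refine image_subset_iff.mpr
      (convexHull_min (fun k hk => sub_mem_subdiffM_of_mem_optClass hk) ?_)
    simpa only [sub_eq_neg_add] using (convex_subdiffM _ x).translate_preimage_right (-x)

end DistanceSquared

/-- For `f_K(x) = -dist_K(x)²/2`, the subdifferential is `∂f_K(x) = conv(opt_K(x)) - x`, and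
the unique element of minimal norm of `∂f_K(x)` (the extended gradient `∇f_K(x)`) is
`η_K(x) - x`, where `η_K(x)` is the unique nearest point to `x` in `conv(opt_K(x))`. -/
theorem subdiff_fK_eq {d : ℕ} (K : Set (EuclideanSpace ℝ (Fin d))) (hKne : K.Nonempty)
    (hKcl : IsClosed K) (x : EuclideanSpace ℝ (Fin d)) :
    subdiffM (fun y => -(Metric.infDist y K ^ 2) / 2) x =
      (fun z => z - x) '' convexHull ℝ (optClass K x) ∧
    ∀ η : EuclideanSpace ℝ (Fin d), η ∈ convexHull ℝ (optClass K x) →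
      (∀ z ∈ convexHull ℝ (optClass K x), dist x η ≤ dist x z) →
      (η - x ∈ subdiffM (fun y => -(Metric.infDist y K ^ 2) / 2) x ∧
        (∀ ξ ∈ subdiffM (fun y => -(Metric.infDist y K ^ 2) / 2) x, ‖η - x‖ ≤ ‖ξ‖) ∧
        ∀ ξ ∈ subdiffM (fun y => -(Metric.infDist y K ^ 2) / 2) x, ‖ξ‖ = ‖η - x‖ → ξ = η - x) := by
  have hset := subdiffM_eq_image_convexHull_optClass hKne hKcl x
  refine ⟨hset, fun η hη hmin => ?_⟩
  have hmem : η - x ∈ subdiffM (fun y => -(infDist y K ^ 2) / 2) x := hset ▸ ⟨η, hη, rfl⟩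
  have hle : ∀ ξ ∈ subdiffM (fun y => -(infDist y K ^ 2) / 2) x, ‖η - x‖ ≤ ‖ξ‖ := by
    rw [hset]
    rintro _ ⟨z, hz, rfl⟩
    simpa only [dist_eq_norm'] using hmin z hz
  exact ⟨hmem, hle, fun ξ hξ => eq_of_norm_eq_of_forall_norm_le (convex_subdiffM _ x) hmem hξ hle⟩
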